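/- arXiv:2508.01745 — 2 statements merged into one kernel-verified Lean document; each statement's English description precedes it below -/
import Mathlib

section
/- Let τ₁,…,τ_U > 0 with ∑_u τ_u = 1, and define the global gradient ∇F(w) = ∑_u τ_u ∇F_u(w). Suppose E[‖∇F_u(w) − ∇F(w)‖²] ≤ Z_u² for each u, and let β̄₁,…,β̄_U ≥ 0 with ∑_u β̄_u = 1. Then E[‖∇F(w) − ∑_u β̄_u ∇F_u(w)‖²] ≤ χ² · ∑_u τ_u Z_u², where χ² = ∑_u (β̄_u − τ_u)²/τ_u. -/
/-!
Since `∑ τ = ∑ β̄`, the difference `∑ τ_u ∇F_u - ∑ β̄_u ∇F_u` equals `∑ (τ_u - β̄_u) (∇F_u - ∇F)`.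
Cauchy–Schwarz with weights `τ_u` bounds its squared norm pointwise by
`χ² · ∑ τ_u ‖∇F_u - ∇F‖²`, and taking expectations gives the claim.
-/

open MeasureTheory

section

variable {ι E : Type*} [SeminormedAddCommGroup E] [NormedSpace ℝ E]

noncomputable def chiSquareDiv [Fintype ι] (p q : ι → ℝ) : ℝ :=
  ∑ i, (p i - q i) ^ 2 / q i

lemma chiSquareDiv_nonneg [Fintype ι] (p : ι → ℝ) {q : ι → ℝ} (hq : ∀ i, 0 ≤ q i) :
    0 ≤ chiSquareDiv p q :=
  Finset.sum_nonneg fun i _ => div_nonneg (sq_nonneg _) (hq i)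

lemma sq_norm_sum_smul_le (s : Finset ι) (c w : ι → ℝ) (hw : ∀ i ∈ s, 0 < w i) (v : ι → E) :
    ‖∑ i ∈ s, c i • v i‖ ^ 2 ≤ (∑ i ∈ s, c i ^ 2 / w i) * ∑ i ∈ s, w i * ‖v i‖ ^ 2 := by
  have h_tri : ‖∑ i ∈ s, c i • v i‖ ≤ ∑ i ∈ s, |c i| * ‖v i‖ :=
    (norm_sum_le _ _).trans_eq (by simp only [norm_smul, Real.norm_eq_abs])
  calc ‖∑ i ∈ s, c i • v i‖ ^ 2 ≤ (∑ i ∈ s, |c i| * ‖v i‖) ^ 2 := by gcongr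
    _ ≤ _ := by
      refine Finset.sum_sq_le_sum_mul_sum_of_sq_le_mul s
        (fun i hi => div_nonneg (sq_nonneg _) (hw i hi).le)
        (fun i hi => mul_nonneg (hw i hi).le (sq_nonneg _)) fun i hi => le_of_eq ?_
      have := (hw i hi).ne'
      rw [mul_pow, sq_abs]
      field_simp

lemma Finset.sum_smul_sub_const_of_sum_eq_zero {R M : Type*} [Ring R] [AddCommGroup M]
    [Module R M] (s : Finset ι) {a : ι → R} (ha : ∑ i ∈ s, a i = 0) (v : ι → M) (x : M) :
    ∑ i ∈ s, a i • (v i - x) = ∑ i ∈ s, a i • v i := by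
  simp only [smul_sub, Finset.sum_sub_distrib, ← Finset.sum_smul, ha, zero_smul, sub_zero]

lemma sq_norm_sum_smul_sub_sum_smul_le_chiSquareDiv [Fintype ι] {τ β : ι → ℝ}
    (hτ : ∀ i, 0 < τ i) (hsum : ∑ i, β i = ∑ i, τ i) (v : ι → E) (x : E) :
    ‖∑ i, τ i • v i - ∑ i, β i • v i‖ ^ 2 ≤
      chiSquareDiv β τ * ∑ i, τ i * ‖v i - x‖ ^ 2 := by
  have h_diff : ∑ i, τ i • v i - ∑ i, β i • v i = ∑ i, (τ i - β i) • (v i - x) := by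
    have h_zero : ∑ i, (τ i - β i) = 0 := by simp [Finset.sum_sub_distrib, hsum]
    rw [Finset.sum_smul_sub_const_of_sum_eq_zero _ h_zero v x]
    simp only [sub_smul, Finset.sum_sub_distrib]
  have h_sq : ∀ i, (τ i - β i) ^ 2 = (β i - τ i) ^ 2 := fun i => by ring
  rw [h_diff, chiSquareDiv]
  simpa only [Pi.sub_apply, h_sq] using
    sq_norm_sum_smul_le Finset.univ (τ - β) τ (fun i _ => hτ i) (v · - x)

end

theorem chi_square_heterogeneity_bound_general
    {Ω : Type*} [MeasurableSpace Ω] (μ : Measure Ω)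
    {E : Type*} [NormedAddCommGroup E] [InnerProductSpace ℝ E]
    (U : ℕ) (τ β Z : Fin U → ℝ)
    (hτpos : ∀ u, 0 < τ u) (hτsum : ∑ u, τ u = 1)
    (hβsum : ∑ u, β u = 1)
    (G : Fin U → Ω → E)  -- G u ω = ∇F_u evaluated at the (possibly random) point w
    (Gbar : Ω → E) (hGbar : ∀ ω, Gbar ω = ∑ u, τ u • G u ω)
    (hIntu : ∀ u, Integrable (fun ω => ‖G u ω - Gbar ω‖ ^ 2) μ)
    (hZ : ∀ u, ∫ ω, ‖G u ω - Gbar ω‖ ^ 2 ∂μ ≤ (Z u) ^ 2) :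
    ∫ ω, ‖Gbar ω - ∑ u, β u • G u ω‖ ^ 2 ∂μ ≤
      (∑ u, (β u - τ u) ^ 2 / τ u) * ∑ u, τ u * (Z u) ^ 2 := by
  have hχ := chiSquareDiv_nonneg β fun u => (hτpos u).le
  have h_pointwise : ∀ ω, ‖Gbar ω - ∑ u, β u • G u ω‖ ^ 2 ≤
      chiSquareDiv β τ * ∑ u, τ u * ‖G u ω - Gbar ω‖ ^ 2 := fun ω => by
    have := sq_norm_sum_smul_sub_sum_smul_le_chiSquareDiv hτpos (hβsum.trans hτsum.symm)
      (G · ω) (Gbar ω)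
    rwa [← hGbar ω] at this
  have h_int_τ : ∀ u, Integrable (fun ω => τ u * ‖G u ω - Gbar ω‖ ^ 2) μ :=
    fun u => (hIntu u).const_mul _
  calc ∫ ω, ‖Gbar ω - ∑ u, β u • G u ω‖ ^ 2 ∂μ
      ≤ ∫ ω, chiSquareDiv β τ * ∑ u, τ u * ‖G u ω - Gbar ω‖ ^ 2 ∂μ :=
        integral_mono_of_nonneg (ae_of_all _ fun _ => by positivity)
          ((integrable_finsetSum _ fun u _ => h_int_τ u).const_mul _) (ae_of_all _ h_pointwise)
    _ = chiSquareDiv β τ * ∑ u, τ u * ∫ ω, ‖G u ω - Gbar ω‖ ^ 2 ∂μ := by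
        simp only [integral_const_mul, integral_finsetSum _ fun u _ => h_int_τ u]
    _ ≤ chiSquareDiv β τ * ∑ u, τ u * (Z u) ^ 2 := by
        gcongr with u
        · exact (hτpos u).le
        · exact hZ u

/-- Heterogeneity bound for biased aggregation weights: with global gradient
`∇F = ∑_u τ_u ∇F_u`, heterogeneity bounds `E[‖∇F_u - ∇F‖²] ≤ Z_u²`, and weights `β̄_u`
summing to one, `E[‖∇F - ∑_u β̄_u ∇F_u‖²] ≤ χ² ∑_u τ_u Z_u²` where
`χ² = ∑_u (β̄_u - τ_u)²/τ_u`. -/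
theorem chi_square_heterogeneity_bound
    {Ω : Type*} [MeasurableSpace Ω] (μ : Measure Ω) [IsProbabilityMeasure μ]
    {E : Type*} [NormedAddCommGroup E] [InnerProductSpace ℝ E]
    (U : ℕ) (τ β Z : Fin U → ℝ)
    (hτpos : ∀ u, 0 < τ u) (hτsum : ∑ u, τ u = 1)
    (hβnonneg : ∀ u, 0 ≤ β u) (hβsum : ∑ u, β u = 1)
    (G : Fin U → Ω → E)  -- G u ω = ∇F_u evaluated at the (possibly random) point w
    (Gbar : Ω → E) (hGbar : ∀ ω, Gbar ω = ∑ u, τ u • G u ω)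
    (hIntu : ∀ u, Integrable (fun ω => ‖G u ω - Gbar ω‖ ^ 2) μ)
    (hZ : ∀ u, ∫ ω, ‖G u ω - Gbar ω‖ ^ 2 ∂μ ≤ (Z u) ^ 2)
    (hInt : Integrable (fun ω => ‖Gbar ω - ∑ u, β u • G u ω‖ ^ 2) μ) :
    ∫ ω, ‖Gbar ω - ∑ u, β u • G u ω‖ ^ 2 ∂μ ≤
      (∑ u, (β u - τ u) ^ 2 / τ u) * ∑ u, τ u * (Z u) ^ 2 :=
  chi_square_heterogeneity_bound_general μ U τ β Z hτpos hτsum hβsum G Gbar hGbar hIntu hZ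
end

section
/- Let g₁,…,g_U be independent Bernoulli trials where trial u succeeds with probability 1 − q ∈ (0,1], and let S devices be sampled i.i.d. with replacement from distribution (τ_u). Conditional on at least one of the S sampled devices succeeding, the expected value of the average of the gradients over succeeding sampled devices equals ∑_u τ_u g_u, i.e., the aggregation rule is an unbiased estimator of the weighted gradient when all devices have the same transmission error probability q. -/
/-!
Fix the success pattern `b` and let `A` be its (nonempty) set of successful slots. Under
the product weights `∏ j, τ (s j)` every coordinate `s i` has law `τ`, so each of the `#A`
gradients `g (s i)`, `i ∈ A`, has expectation `∑ u, τ u • g u`, and hence so does their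
average. What is left is the total Bernoulli weight of the patterns with at least one
success, `1 - q ^ S`, which cancels the normalisation.
-/

open Finset

section ProductWeights

variable {ι α R : Type*} [Fintype ι] [DecidableEq ι] [Fintype α] [CommSemiring R]

theorem sum_pi_ite_apply_eq_prod [DecidableEq α] (τ : α → R) (hτ : ∑ a, τ a = 1)
    (i : ι) (a : α) :
    ∑ s : ι → α, (if s i = a then ∏ j, τ (s j) else 0) = τ a := by
  -- Absorb the constraint `s i = a` into the `i`-th factor so that the sum factorises.
  let w : ι → α → R := fun j b => (if j = i then (if b = a then 1 else 0) else 1) * τ b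
  calc ∑ s : ι → α, (if s i = a then ∏ j, τ (s j) else 0)
      = ∑ s : ι → α, ∏ j, w j (s j) := by
        refine sum_congr rfl fun s _ => ?_
        rw [prod_mul_distrib, prod_ite_eq']
        split_ifs <;> simp_all
    _ = ∏ j, ∑ b, w j b := (Fintype.prod_sum w).symm
    _ = τ a := by
        simp [w, ite_mul, hτ]

theorem sum_pi_prod_smul_apply {M : Type*} [AddCommMonoid M] [Module R M]
    (τ : α → R) (hτ : ∑ a, τ a = 1) (f : α → M) (i : ι) :
    ∑ s : ι → α, (∏ j, τ (s j)) • f (s i) = ∑ a, τ a • f a := by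
  classical
  calc ∑ s : ι → α, (∏ j, τ (s j)) • f (s i)
      = ∑ s : ι → α, ∑ a, (if s i = a then ∏ j, τ (s j) else 0) • f a := by
        simp [ite_smul]
    _ = ∑ a, τ a • f a := by
        rw [sum_comm]
        simp_rw [← sum_smul, sum_pi_ite_apply_eq_prod τ hτ]

end ProductWeights

theorem sum_pi_prod_smul_average {ι α 𝕜 M : Type*} [Fintype ι] [DecidableEq ι] [Fintype α]
    [Field 𝕜] [CharZero 𝕜] [AddCommMonoid M] [Module 𝕜 M]
    (τ : α → 𝕜) (hτ : ∑ a, τ a = 1) (f : α → M) {A : Finset ι} (hA : A.Nonempty) :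
    ∑ s : ι → α, (∏ j, τ (s j)) • ((#A : 𝕜)⁻¹ • ∑ i ∈ A, f (s i)) = ∑ a, τ a • f a := by
  classical
  simp_rw [smul_comm _ (#A : 𝕜)⁻¹, ← smul_sum, smul_sum (s := A)]
  rw [sum_comm]
  simp_rw [sum_pi_prod_smul_apply τ hτ f, sum_const, ← Nat.cast_smul_eq_nsmul 𝕜,
    smul_smul]
  rw [inv_mul_cancel₀ (by exact_mod_cast hA.card_pos.ne'), one_smul]

section Bernoulli

variable {ι R : Type*} [Fintype ι] [DecidableEq ι]

theorem sum_pi_bool_prod_ite [CommSemiring R] (p r : R) :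
    ∑ b : ι → Bool, ∏ i, (if b i then p else r) = (p + r) ^ Fintype.card ι := by
  rw [← Fintype.prod_sum fun (_ : ι) (c : Bool) => if c then p else r]
  simp

theorem sum_filter_exists_true_prod_ite [CommRing R]
    [DecidablePred fun b : ι → Bool => ∃ i, b i = true] (q : R) :
    ∑ b ∈ univ.filter (fun b : ι → Bool => ∃ i, b i = true), ∏ i, (if b i then 1 - q else q)
      = 1 - q ^ Fintype.card ι := by
  have hsplit := sum_filter_add_sum_filter_not univ (fun b : ι → Bool => ∃ i, b i = true)
    fun b => ∏ i, (if b i then 1 - q else q)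
  have hnone : univ.filter (fun b : ι → Bool => ¬∃ i, b i = true) = {fun _ => false} := by
    ext b
    simp [funext_iff]
  rw [sum_pi_bool_prod_ite, sub_add_cancel, one_pow, hnone, sum_singleton] at hsplit
  simp only [Bool.false_eq_true, if_false, prod_const, card_univ] at hsplit
  exact eq_sub_of_add_eq hsplit

end Bernoulli

theorem aggregation_unbiased_uniform_error_general
    (U S V : ℕ) (hS : 0 < S)
    (τ : Fin U → ℝ) (hτsum : ∑ u, τ u = 1)
    (q : ℝ) (hq0 : 0 ≤ q) (hq1 : q < 1)
    (g : Fin U → EuclideanSpace ℝ (Fin V))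
    (P : (Fin S → Fin U) × (Fin S → Bool) → ℝ)
    (hP : ∀ ω, P ω = (∏ i, τ (ω.1 i)) * ∏ i, (if ω.2 i then 1 - q else q)) :
    ∑ ω ∈ Finset.univ.filter (fun ω : (Fin S → Fin U) × (Fin S → Bool) =>
        ∃ i, ω.2 i = true),
      (P ω / (1 - q ^ S)) •
        (((Finset.univ.filter (fun i : Fin S => ω.2 i = true)).card : ℝ)⁻¹ •
          ∑ i ∈ Finset.univ.filter (fun i : Fin S => ω.2 i = true), g (ω.1 i))
      = ∑ u, τ u • g u := by
  have hsuccess : 1 - q ^ S ≠ 0 := (sub_pos.2 (pow_lt_one₀ hq0 hq1 hS.ne')).ne'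
  rw [← univ_product_univ, filter_product_right (fun b : Fin S → Bool => ∃ i, b i = true),
    sum_product_right]
  calc _ = ∑ b ∈ univ.filter (fun b : Fin S → Bool => ∃ i, b i = true),
        ((∏ i, (if b i then 1 - q else q)) / (1 - q ^ S)) • ∑ u, τ u • g u := by
        refine sum_congr rfl fun b hb => ?_
        obtain ⟨i, hi⟩ := (mem_filter.1 hb).2
        have hA : (univ.filter fun i : Fin S => b i = true).Nonempty := ⟨i, by simpa using hi⟩
        rw [← sum_pi_prod_smul_average τ hτsum g hA, smul_sum]
        refine sum_congr rfl fun s _ => ?_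
        simp only [hP, smul_smul]
        congr 1
        ring
    _ = ∑ u, τ u • g u := by
        rw [← sum_smul, ← sum_div, sum_filter_exists_true_prod_ite, Fintype.card_fin,
          div_self hsuccess, one_smul]

/-- Unbiasedness of the FL aggregation under uniform transmission error probability `q`:
`S` devices are sampled i.i.d. with replacement according to `(τ_u)`, and each sampled
device independently succeeds with probability `1 - q`.  Conditional on at least one
success, the expected average of the gradients over the succeeding sampled devices equals
the weighted gradient `∑_u τ_u g_u`.  The finite sample space is
`(Fin S → Fin U) × (Fin S → Bool)` (sampled indices and success indicators), with
probability mass `P(s, a) = (∏ i τ_{s i}) (∏ i (1-q if a i else q))`; the conditioning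
event has probability `1 - q^S`. -/
theorem aggregation_unbiased_uniform_error
    (U S V : ℕ) (hS : 0 < S)
    (τ : Fin U → ℝ) (hτpos : ∀ u, 0 < τ u) (hτsum : ∑ u, τ u = 1)
    (q : ℝ) (hq0 : 0 ≤ q) (hq1 : q < 1)
    (g : Fin U → EuclideanSpace ℝ (Fin V))
    (P : (Fin S → Fin U) × (Fin S → Bool) → ℝ)
    (hP : ∀ ω, P ω = (∏ i, τ (ω.1 i)) * ∏ i, (if ω.2 i then 1 - q else q)) :
    ∑ ω ∈ Finset.univ.filter (fun ω : (Fin S → Fin U) × (Fin S → Bool) =>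
        ∃ i, ω.2 i = true),
      (P ω / (1 - q ^ S)) •
        (((Finset.univ.filter (fun i : Fin S => ω.2 i = true)).card : ℝ)⁻¹ •
          ∑ i ∈ Finset.univ.filter (fun i : Fin S => ω.2 i = true), g (ω.1 i))
      = ∑ u, τ u • g u :=
  aggregation_unbiased_uniform_error_general U S V hS τ hτsum q hq0 hq1 g P hP
end
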